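/- arXiv:1207.0564 — 2 statements merged into one kernel-verified Lean document; each statement's English description precedes it below -/
import Mathlib

section
/- For every real polynomial F of one variable with deg F ≤ 2r − 1, the Gauss quadrature is exact: ∫_{−1}^{1} F(x) dx = Σ_{k=1}^{r} A_k · F(G_k). -/
open Polynomial MeasureTheory

/-- `Leg r` is the `r`-th (formal) derivative of `(X² − 1)^r`, a nonzero scalar
multiple of the degree-`r` Legendre polynomial. -/
noncomputable def Leg (r : ℕ) : Polynomial ℝ :=
  (fun p => Polynomial.derivative p)^[r] ((Polynomial.X ^ 2 - 1) ^ r)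

/-- `G 1 < … < G r` are the Gauss points: the roots of `Leg r`, all in `(-1,1)`. -/
def IsGaussPoints (r : ℕ) (G : ℕ → ℝ) : Prop :=
  (∀ k, 1 ≤ k → k < r → G k < G (k + 1)) ∧
  ∀ k, 1 ≤ k → k ≤ r → G k ∈ Set.Ioo (-1 : ℝ) 1 ∧ (Leg r).IsRoot (G k)

/-- `A k = ∫_{-1}^{1} ℓ_k` where `ℓ_k` is the Lagrange basis polynomial of degree
`≤ r - 1` at the Gauss points, i.e. `ℓ_k (G j) = δ_{jk}`. -/
def IsGaussWeights (r : ℕ) (G A : ℕ → ℝ) : Prop :=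
  ∀ k, 1 ≤ k → k ≤ r → ∃ ℓ : Polynomial ℝ,
    ℓ.natDegree ≤ r - 1 ∧
    (∀ j, 1 ≤ j → j ≤ r → ℓ.eval (G j) = if j = k then 1 else 0) ∧
    A k = ∫ x in (-1 : ℝ)..1, ℓ.eval x

/-! Divide `F` by `Leg r`: `F = Leg r * d + s` with `deg d < r` and `deg s < r`. Integrating by
parts `r` times, with boundary terms vanishing because `(X² − 1)^(r − i)` divides the `i`-th
derivative of `(X² − 1)^r`, shows that `Leg r` is orthogonal to `d`, so `∫ F = ∫ s`. At the Gauss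
points `F` and `s` agree, and `s`, of degree `< r`, is its own Lagrange interpolant
`∑ s(G_k) ℓ_k`, whose integral is `∑ A_k s(G_k)`. -/

namespace Polynomial

theorem IsRoot.iterate_derivative_pow {R : Type*} [CommSemiring R] {p : R[X]}
    {x : R} (hx : p.IsRoot x) {n i : ℕ} (hi : i < n) : (derivative^[i] (p ^ n)).IsRoot x := by
  have hpow : (p ^ (n - i)).IsRoot x := by
    rw [IsRoot, eval_pow, hx.eq_zero, zero_pow (by omega)]
  exact hpow.dvd (pow_sub_dvd_iterate_derivative_pow p n i)

theorem natDegree_iterate_derivative_eq {R : Type*} [CommRing R] [IsDomain R] [CharZero R]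
    (p : R[X]) {k : ℕ} (hk : k ≤ p.natDegree) :
    (derivative^[k] p).natDegree = p.natDegree - k := by
  rcases eq_or_ne p 0 with rfl | hp
  · simp
  refine le_antisymm (natDegree_iterate_derivative p k) (le_natDegree_of_ne_zero ?_)
  rw [coeff_iterate_derivative, Nat.sub_add_cancel hk, ← leadingCoeff, nsmul_eq_mul]
  exact mul_ne_zero (Nat.cast_ne_zero.2 (Nat.descFactorial_pos.2 hk).ne')
    (leadingCoeff_ne_zero.2 hp)

theorem natDegree_div_le {K : Type*} [Field K] (p q : K[X]) :
    (p / q).natDegree ≤ p.natDegree - q.natDegree := by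
  rcases eq_or_ne q 0 with rfl | hq
  · simp
  rw [div_def]
  refine (natDegree_C_mul_le _ _).trans_eq ?_
  rw [natDegree_divByMonic _ (monic_mul_leadingCoeff_inv hq), natDegree_mul_leadingCoeff_inv _ hq]

theorem eval_mod_of_isRoot {K : Type*} [Field K] (p : K[X]) {q : K[X]} {x : K}
    (hx : q.IsRoot x) : (p % q).eval x = p.eval x := by
  conv_rhs => rw [← EuclideanDomain.div_add_mod p q]
  rw [eval_add, eval_mul, hx.eq_zero, zero_mul, zero_add]

end Polynomial

namespace Lagrange

variable {K ι : Type*} [Field K] [DecidableEq ι] {s : Finset ι} {v : ι → K} {ℓ : ι → K[X]}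

theorem eq_sum_eval_smul (hvs : Set.InjOn v s) (hℓdeg : ∀ i ∈ s, (ℓ i).degree < s.card)
    (hℓ : ∀ i ∈ s, ∀ j ∈ s, (ℓ i).eval (v j) = if j = i then 1 else 0)
    {p : K[X]} (hp : p.degree < s.card) :
    p = ∑ i ∈ s, p.eval (v i) • ℓ i := by
  refine eq_of_degrees_lt_of_eval_index_eq s hvs hp ?_ fun j hj => ?_
  · rw [← mem_degreeLT]
    exact Submodule.sum_mem _ fun i hi => Submodule.smul_mem _ _ (mem_degreeLT.2 (hℓdeg i hi))
  · rw [eval_finsetSum, Finset.sum_eq_single j]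
    · rw [eval_smul, hℓ j hj j hj, if_pos rfl, smul_eq_mul, mul_one]
    · intro i hi hij
      rw [eval_smul, hℓ i hi j hj, if_neg (Ne.symm hij), smul_zero]
    · exact fun hj' => absurd hj hj'

end Lagrange

namespace intervalIntegral

theorem integral_eval_eq_sum_of_lagrange {ι : Type*} [DecidableEq ι] {s : Finset ι}
    {v : ι → ℝ} {ℓ : ι → ℝ[X]} (hvs : Set.InjOn v s) (hℓdeg : ∀ i ∈ s, (ℓ i).degree < s.card)
    (hℓ : ∀ i ∈ s, ∀ j ∈ s, (ℓ i).eval (v j) = if j = i then 1 else 0)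
    {p : ℝ[X]} (hp : p.degree < s.card) (a b : ℝ) :
    ∫ x in a..b, p.eval x = ∑ i ∈ s, (∫ x in a..b, (ℓ i).eval x) * p.eval (v i) := by
  conv_lhs => rw [Lagrange.eq_sum_eval_smul hvs hℓdeg hℓ hp]
  simp only [eval_finsetSum, eval_smul, smul_eq_mul]
  rw [integral_finsetSum fun i _ => (Continuous.intervalIntegrable (by fun_prop) _ _)]
  exact Finset.sum_congr rfl fun i _ => by rw [integral_const_mul, mul_comm]

theorem integral_eval_derivative_mul_eq_neg {u q : ℝ[X]} {a b : ℝ}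
    (ha : u.IsRoot a) (hb : u.IsRoot b) :
    ∫ x in a..b, (derivative u).eval x * q.eval x =
      -∫ x in a..b, u.eval x * (derivative q).eval x := by
  have h := integral_deriv_mul_eq_sub (fun x _ => u.hasDerivAt x)
    (fun x _ => q.hasDerivAt x) ((derivative u).continuous.intervalIntegrable a b)
    ((derivative q).continuous.intervalIntegrable a b)
  rw [ha.eq_zero, hb.eq_zero, zero_mul, zero_mul, sub_zero,
    integral_add (Continuous.intervalIntegrable (by fun_prop) a b)
      (Continuous.intervalIntegrable (by fun_prop) a b)] at h
  exact eq_neg_of_add_eq_zero_left h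

theorem integral_eval_iterate_derivative_mul_eq_zero {f q : ℝ[X]} {a b : ℝ}
    {n : ℕ} (hf : ∀ i < n, (derivative^[i] f).IsRoot a ∧ (derivative^[i] f).IsRoot b)
    (hq : derivative^[n] q = 0) :
    ∫ x in a..b, (derivative^[n] f).eval x * q.eval x = 0 := by
  induction n generalizing q with
  | zero => simp [show q = 0 from hq]
  | succ n ih =>
    obtain ⟨ha, hb⟩ := hf n n.lt_succ_self
    rw [Function.iterate_succ_apply', integral_eval_derivative_mul_eq_neg ha hb,
      ih (fun i hi => hf i (hi.trans n.lt_succ_self)) hq, neg_zero]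

end intervalIntegral

theorem integral_leg_mul_eq_zero {r : ℕ} {q : ℝ[X]} (hq : q.natDegree < r) :
    ∫ x in (-1 : ℝ)..1, (Leg r).eval x * q.eval x = 0 :=
  intervalIntegral.integral_eval_iterate_derivative_mul_eq_zero
    (fun _ hi => ⟨IsRoot.iterate_derivative_pow (by simp) hi,
      IsRoot.iterate_derivative_pow (by simp) hi⟩) (iterate_derivative_eq_zero hq)

theorem natDegree_leg (r : ℕ) : (Leg r).natDegree = r := by
  have h : ((X ^ 2 - 1 : ℝ[X]) ^ r).natDegree = 2 * r := by
    rw [← C_1, (monic_X_pow_sub_C (1 : ℝ) two_ne_zero).natDegree_pow, natDegree_X_pow_sub_C,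
      mul_comm]
  unfold Leg
  rw [natDegree_iterate_derivative_eq _ (by omega), h]
  omega

theorem leg_ne_zero {r : ℕ} (hr : 1 ≤ r) : Leg r ≠ 0 :=
  ne_zero_of_natDegree_gt (n := 0) (by rw [natDegree_leg]; omega)

theorem integral_eval_eq_integral_eval_mod_leg {r : ℕ} {F : ℝ[X]} (hF : F.natDegree < 2 * r) :
    ∫ x in (-1 : ℝ)..1, F.eval x = ∫ x in (-1 : ℝ)..1, (F % Leg r).eval x := by
  conv_lhs => rw [← EuclideanDomain.div_add_mod F (Leg r)]
  simp only [eval_add, eval_mul]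
  rw [intervalIntegral.integral_add (Continuous.intervalIntegrable (by fun_prop) _ _)
      (Continuous.intervalIntegrable (by fun_prop) _ _),
    integral_leg_mul_eq_zero
      ((natDegree_div_le F (Leg r)).trans_lt (by rw [natDegree_leg]; omega)), zero_add]

/-- Gauss quadrature with `r` nodes is exact on polynomials of degree `≤ 2r − 1`:
`∫_{−1}^{1} F = Σ_{k=1}^{r} A_k F(G_k)`. -/
theorem gauss_quadrature_exact (r : ℕ) (hr : 1 ≤ r) (G A : ℕ → ℝ)
    (hG : IsGaussPoints r G) (hA : IsGaussWeights r G A)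
    (F : Polynomial ℝ) (hF : F.natDegree ≤ 2 * r - 1) :
    ∫ x in (-1 : ℝ)..1, F.eval x = ∑ k ∈ Finset.Icc 1 r, A k * F.eval (G k) := by
  obtain ⟨hstep, hroot⟩ := hG
  choose! ℓ hℓdeg hℓ hAℓ using hA
  have hcard : (Finset.Icc 1 r).card = r := by simp
  have hinj : Set.InjOn G (Finset.Icc 1 r) := by
    rw [Finset.coe_Icc]
    refine (strictMonoOn_of_lt_succ Set.ordConnected_Icc fun k _ hk hk' => ?_).injOn
    rw [Order.succ_eq_add_one] at hk' ⊢
    exact hstep k hk.1 hk'.2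
  have hmod : (F % Leg r).degree < (Finset.Icc 1 r).card := by
    simpa [degree_eq_natDegree (leg_ne_zero hr), natDegree_leg] using
      degree_mod_lt F (leg_ne_zero hr)
  rw [integral_eval_eq_integral_eval_mod_leg (r := r) (by omega),
    intervalIntegral.integral_eval_eq_sum_of_lagrange hinj (fun k hk => ?_)
      (fun k hk j hj => ?_) hmod]
  · refine Finset.sum_congr rfl fun k hk => ?_
    obtain ⟨hk1, hkr⟩ := Finset.mem_Icc.1 hk
    rw [hAℓ k hk1 hkr, eval_mod_of_isRoot _ (hroot k hk1 hkr).2]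
  · obtain ⟨hk1, hkr⟩ := Finset.mem_Icc.1 hk
    rw [hcard]
    exact degree_le_natDegree.trans_lt
      (by exact_mod_cast (hℓdeg k hk1 hkr).trans_lt (Nat.sub_one_lt_of_le hr le_rfl))
  · obtain ⟨hk1, hkr⟩ := Finset.mem_Icc.1 hk
    obtain ⟨hj1, hjr⟩ := Finset.mem_Icc.1 hj
    exact hℓ k hk1 hkr j hj1 hjr
end

section
/- Let H be a real Hilbert space, U ⊆ H a finite-dimensional subspace with U ≠ {0}, and V a finite-dimensional real normed space with dim V = dim U. Let b : H × V → ℝ be bilinear, and suppose there are constants M > 0 and c_0 > 0 such that |b(x, w)| ≤ M · ‖x‖ · ‖w‖ for all x ∈ H, w ∈ V, and for every v ∈ U there is w ∈ V with w ≠ 0 and b(v, w) ≥ c_0 · ‖v‖ · ‖w‖ (discrete inf-sup condition). If u ∈ H and u_h ∈ U satisfy the Petrov–Galerkin orthogonality b(u − u_h, w) = 0 for all w ∈ V, then ‖u − u_h‖ ≤ (M / c_0) · inf over v ∈ U of ‖u − v‖. -/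
/-!
Write `u - v = p + n` with `p = uh - v ∈ U` and `n = u - uh`. Since `b n = 0`, the inf-sup
condition at `p` gives `c₀ ‖p‖ ≤ M ‖p + t n‖` for every real `t`; everything then happens in the
plane spanned by `p` and `n`. The Gram determinant `G(x, y) = ‖x‖²‖y‖² - ⟪x, y⟫²` is unchanged
by shears, so minimising over `t` gives `c₀² ‖p‖² ‖n‖² ≤ M² G(p, n) = M² G(p, p + n) ≤
M² ‖p‖² ‖p + n‖²`, i.e. `c₀ ‖n‖ ≤ M ‖p + n‖` (for `p = 0` this is `c₀ ≤ M`, which the inf-sup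
condition at any nonzero element of `U` gives). This is Kato's identity `‖I - P‖ = ‖P‖` for
idempotents, in the only two dimensions it is needed; taking the infimum over `v` finishes.
-/

open RealInnerProductSpace

section GramDeterminant

variable {F : Type*} [NormedAddCommGroup F] [InnerProductSpace ℝ F]

theorem exists_norm_add_smul_sq_mul_norm_sq_eq (x y : F) :
    ∃ t : ℝ, ‖x + t • y‖ ^ 2 * ‖y‖ ^ 2 = ‖x‖ ^ 2 * ‖y‖ ^ 2 - ⟪x, y⟫ ^ 2 := by
  by_cases hy : y = 0
  · exact ⟨0, by simp [hy]⟩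
  have hy' : ‖y‖ ^ 2 ≠ 0 := by positivity
  refine ⟨-⟪x, y⟫ / ‖y‖ ^ 2, ?_⟩
  rw [norm_add_sq_real, real_inner_smul_right, norm_smul, mul_pow, Real.norm_eq_abs, sq_abs]
  field_simp
  ring

theorem norm_sq_mul_norm_sq_sub_inner_sq_le (x y : F) :
    ‖x‖ ^ 2 * ‖y‖ ^ 2 - ⟪x, y⟫ ^ 2 ≤ ‖x + y‖ ^ 2 * ‖x‖ ^ 2 := by
  rw [norm_add_sq_real]
  nlinarith [sq_nonneg (‖x‖ ^ 2 + ⟪x, y⟫)]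

theorem mul_norm_le_mul_norm_add_of_forall_le {c M : ℝ} (hc : 0 ≤ c) (hM : 0 ≤ M) {p n : F}
    (hp : p ≠ 0) (h : ∀ t : ℝ, c * ‖p‖ ≤ M * ‖p + t • n‖) : c * ‖n‖ ≤ M * ‖p + n‖ := by
  obtain ⟨t, ht⟩ := exists_norm_add_smul_sq_mul_norm_sq_eq p n
  have hsq : (c * ‖n‖ * ‖p‖) ^ 2 ≤ (M * ‖p + n‖ * ‖p‖) ^ 2 :=
    calc (c * ‖n‖ * ‖p‖) ^ 2 = (c * ‖p‖) ^ 2 * ‖n‖ ^ 2 := by ring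
      _ ≤ (M * ‖p + t • n‖) ^ 2 * ‖n‖ ^ 2 := by gcongr ?_ ^ 2 * _; exact h t
      _ = M ^ 2 * (‖p‖ ^ 2 * ‖n‖ ^ 2 - ⟪p, n⟫ ^ 2) := by rw [mul_pow, mul_assoc, ht]
      _ ≤ M ^ 2 * (‖p + n‖ ^ 2 * ‖p‖ ^ 2) := by
        gcongr; exact norm_sq_mul_norm_sq_sub_inner_sq_le p n
      _ = (M * ‖p + n‖ * ‖p‖) ^ 2 := by ring
  exact le_of_mul_le_mul_right (le_of_sq_le_sq hsq (by positivity)) (norm_pos_iff.mpr hp)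

end GramDeterminant

section PetrovGalerkin

variable {H V : Type*} [NormedAddCommGroup H] [NormedAddCommGroup V] [NormedSpace ℝ V] {M c₀ : ℝ}

theorem le_of_bound_of_infSup [NormedSpace ℝ H] {U : Submodule ℝ H} {b : H →ₗ[ℝ] V →ₗ[ℝ] ℝ}
    (hU : U ≠ ⊥) (hbound : ∀ (x : H) (w : V), |b x w| ≤ M * ‖x‖ * ‖w‖)
    (hinfsup : ∀ v ∈ U, ∃ w : V, w ≠ 0 ∧ c₀ * ‖v‖ * ‖w‖ ≤ b v w) : c₀ ≤ M := by
  obtain ⟨v, hvU, hv⟩ := Submodule.exists_mem_ne_zero_of_ne_bot hU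
  obtain ⟨w, hw, hvw⟩ := hinfsup v hvU
  have : c₀ * (‖v‖ * ‖w‖) ≤ M * (‖v‖ * ‖w‖) := by
    simpa only [mul_assoc] using hvw.trans ((le_abs_self _).trans (hbound v w))
  exact le_of_mul_le_mul_right this (by positivity)

theorem mul_norm_le_mul_norm_add_of_infSup [NormedSpace ℝ H] {U : Submodule ℝ H}
    {b : H →ₗ[ℝ] V →ₗ[ℝ] ℝ} (hbound : ∀ (x : H) (w : V), |b x w| ≤ M * ‖x‖ * ‖w‖)
    (hinfsup : ∀ v ∈ U, ∃ w : V, w ≠ 0 ∧ c₀ * ‖v‖ * ‖w‖ ≤ b v w) {p x : H} (hp : p ∈ U)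
    (hx : ∀ w : V, b x w = 0) : c₀ * ‖p‖ ≤ M * ‖p + x‖ := by
  obtain ⟨w, hw, hpw⟩ := hinfsup p hp
  have : c₀ * ‖p‖ * ‖w‖ ≤ M * ‖p + x‖ * ‖w‖ :=
    calc c₀ * ‖p‖ * ‖w‖ ≤ b p w := hpw
      _ = b (p + x) w := by simp [hx]
      _ ≤ M * ‖p + x‖ * ‖w‖ := (le_abs_self _).trans (hbound _ w)
  exact le_of_mul_le_mul_right this (norm_pos_iff.mpr hw)

theorem mul_norm_sub_le_of_petrovGalerkin [InnerProductSpace ℝ H] {U : Submodule ℝ H}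
    {b : H →ₗ[ℝ] V →ₗ[ℝ] ℝ} (hU : U ≠ ⊥) (hc₀ : 0 ≤ c₀)
    (hbound : ∀ (x : H) (w : V), |b x w| ≤ M * ‖x‖ * ‖w‖)
    (hinfsup : ∀ v ∈ U, ∃ w : V, w ≠ 0 ∧ c₀ * ‖v‖ * ‖w‖ ≤ b v w)
    {u uh v : H} (huh : uh ∈ U) (horth : ∀ w : V, b (u - uh) w = 0) (hv : v ∈ U) :
    c₀ * ‖u - uh‖ ≤ M * ‖u - v‖ := by
  have hcM := le_of_bound_of_infSup hU hbound hinfsup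
  rw [show u - v = (uh - v) + (u - uh) by abel]
  by_cases hp : uh - v = 0
  · rw [hp, zero_add]
    gcongr
  refine mul_norm_le_mul_norm_add_of_forall_le hc₀ (hc₀.trans hcM) hp fun t => ?_
  exact mul_norm_le_mul_norm_add_of_infSup hbound hinfsup (U.sub_mem huh hv)
    fun w => by rw [map_smul, LinearMap.smul_apply, horth, smul_zero]

end PetrovGalerkin

theorem petrov_galerkin_quasi_optimality_general
    {H : Type*} [NormedAddCommGroup H] [InnerProductSpace ℝ H]
    {V : Type*} [NormedAddCommGroup V] [NormedSpace ℝ V]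
    (U : Submodule ℝ H) (hU : U ≠ ⊥)
    (b : H →ₗ[ℝ] V →ₗ[ℝ] ℝ) (M c₀ : ℝ) (hM : 0 < M) (hc₀ : 0 < c₀)
    (hbound : ∀ (x : H) (w : V), |b x w| ≤ M * ‖x‖ * ‖w‖)
    (hinfsup : ∀ v ∈ U, ∃ w : V, w ≠ 0 ∧ c₀ * ‖v‖ * ‖w‖ ≤ b v w)
    (u uh : H) (huh : uh ∈ U)
    (horth : ∀ w : V, b (u - uh) w = 0) :
    ‖u - uh‖ ≤ (M / c₀) * ⨅ v : U, ‖u - (v : H)‖ := by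
  rw [Real.mul_iInf_of_nonneg (by positivity)]
  refine le_ciInf fun v => ?_
  rw [div_mul_eq_mul_div, le_div_iff₀ hc₀, mul_comm]
  exact mul_norm_sub_le_of_petrovGalerkin hU hc₀.le hbound hinfsup huh horth v.2

/-- Abstract Petrov–Galerkin quasi-optimality (Xu–Zikatanov / Kato): if the
bilinear form `b : H × V → ℝ` is bounded by `M` and satisfies a discrete
inf-sup condition with constant `c₀` on a finite-dimensional subspace
`U ≠ {0}` of the Hilbert space `H`, with `dim V = dim U`, and `u_h ∈ U` is a
Petrov–Galerkin approximation of `u` (i.e. `b (u − u_h, ·) = 0` on `V`), then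
`‖u − u_h‖ ≤ (M / c₀) · inf_{v ∈ U} ‖u − v‖`. -/
theorem petrov_galerkin_quasi_optimality
    {H : Type*} [NormedAddCommGroup H] [InnerProductSpace ℝ H] [CompleteSpace H]
    {V : Type*} [NormedAddCommGroup V] [NormedSpace ℝ V] [FiniteDimensional ℝ V]
    (U : Submodule ℝ H) [FiniteDimensional ℝ U] (hU : U ≠ ⊥)
    (hdim : Module.finrank ℝ V = Module.finrank ℝ U)
    (b : H →ₗ[ℝ] V →ₗ[ℝ] ℝ) (M c₀ : ℝ) (hM : 0 < M) (hc₀ : 0 < c₀)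
    (hbound : ∀ (x : H) (w : V), |b x w| ≤ M * ‖x‖ * ‖w‖)
    (hinfsup : ∀ v ∈ U, ∃ w : V, w ≠ 0 ∧ c₀ * ‖v‖ * ‖w‖ ≤ b v w)
    (u uh : H) (huh : uh ∈ U)
    (horth : ∀ w : V, b (u - uh) w = 0) :
    ‖u - uh‖ ≤ (M / c₀) * ⨅ v : U, ‖u - (v : H)‖ :=
  petrov_galerkin_quasi_optimality_general U hU b M c₀ hM hc₀ hbound hinfsup u uh huh horth
end
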